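/- Suppose Ω is compact and the market (f, S) is arbitrage-free, and let H : Ω → ℝ be a continuous nonnegative claim. Then the price of the cheapest superhedge for H equals the least upper bound of the set of no-arbitrage prices of H: inf{ π·f : π is a superhedge for H } = sup{ ∫ H dP : P is a full support martingale measure for (f, S) }. -/

import Mathlib

open MeasureTheory Filter Topology

variable {Ω : Type*}

section Defs

variable [TopologicalSpace Ω] [MeasurableSpace Ω]

/-- A portfolio `π` is an arbitrage for the market `(f, S)`:
nonpositive cost, nonnegative payoff everywhere, strictly positive payoff somewhere. -/
def IsArbitrage {D : ℕ} (f : Fin (D + 1) → ℝ) (S : Fin (D + 1) → C(Ω, ℝ))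
    (π : Fin (D + 1) → ℝ) : Prop :=
  (∑ d, π d * f d) ≤ 0 ∧ (∀ ω : Ω, 0 ≤ ∑ d, π d * S d ω) ∧ (∃ ω : Ω, 0 < ∑ d, π d * S d ω)

/-- The market `(f, S)` is arbitrage-free. -/
def ArbitrageFree {D : ℕ} (f : Fin (D + 1) → ℝ) (S : Fin (D + 1) → C(Ω, ℝ)) : Prop :=
  ¬ ∃ π : Fin (D + 1) → ℝ, IsArbitrage f S π

/-- A measure has full support: every nonempty open set has positive measure. -/
def HasFullSupport (P : Measure Ω) : Prop :=
  ∀ U : Set Ω, IsOpen U → U.Nonempty → 0 < P U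

/-- A martingale measure for the market `(f, S)`: a Borel probability measure under which
every asset payoff is integrable with expectation equal to its time-0 price. -/
def IsMartingaleMeasure {D : ℕ} (f : Fin (D + 1) → ℝ) (S : Fin (D + 1) → C(Ω, ℝ))
    (P : Measure Ω) : Prop :=
  IsProbabilityMeasure P ∧ ∀ d, Integrable (S d) P ∧ (∫ ω, S d ω ∂P) = f d

/-- A portfolio `π` is a superhedge for the claim `H`. -/
def IsSuperhedge {D : ℕ} (S : Fin (D + 1) → C(Ω, ℝ)) (H : C(Ω, ℝ))
    (π : Fin (D + 1) → ℝ) : Prop :=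
  ∀ ω : Ω, H ω ≤ ∑ d, π d * S d ω

/-- A portfolio `π` is a subhedge for the claim `H`. -/
def IsSubhedge {D : ℕ} (S : Fin (D + 1) → C(Ω, ℝ)) (H : C(Ω, ℝ))
    (π : Fin (D + 1) → ℝ) : Prop :=
  ∀ ω : Ω, (∑ d, π d * S d ω) ≤ H ω

end Defs

/-! Integrating a superhedge against a martingale measure shows that every no-arbitrage price
lies below every superhedging cost.

For the converse we use the fundamental theorem of asset pricing: when no portfolio is an
arbitrage, every linear functional that is nonnegative on the gains `S - f` vanishes on them,
so `0` is an interior point of their convex hull inside its span. Hence, for a full-support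
`ν`, a small negative multiple of the `ν`-mean of the gains is the mean under a finitely
supported measure, and mixing the two gives a full-support martingale measure.

If `c` exceeds every no-arbitrage price of `H`, then `c` is not one, so the market extended by
`H` at price `c` has an arbitrage. Integrated against a full-support martingale measure of the
original market, whose price of `H` is below `c`, the arbitrage must be short in `H`; rescaled by
that short position, its remaining holdings superhedge `H` at cost at most `c`. -/

open scoped ENNReal
open ProbabilityTheory

section Measures

variable [MeasurableSpace Ω]

theorem exists_isProbabilityMeasure_integral_eq_of_mem_convexHull {E : Type*}
    [NormedAddCommGroup E] [NormedSpace ℝ E] [CompleteSpace E] {Y : Ω → E}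
    (hY : StronglyMeasurable Y) {x : E}
    (hx : x ∈ convexHull ℝ (Set.range Y)) :
    ∃ P : Measure Ω, IsProbabilityMeasure P ∧ ∫ ω, Y ω ∂P = x := by
  obtain ⟨ι, _, w, z, hw₀, hw₁, hz, rfl⟩ := mem_convexHull_iff_exists_fintype.1 hx
  choose ω hω using hz
  refine ⟨∑ i, ENNReal.ofReal (w i) • Measure.dirac (ω i), ⟨?_⟩, ?_⟩
  · simp [← ENNReal.ofReal_sum_of_nonneg fun i _ => hw₀ i, hw₁]
  · rw [integral_finsetSum_measure fun i _ =>
      (integrable_dirac' hY enorm_lt_top).smul_measure ENNReal.ofReal_ne_top]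
    simp [integral_dirac' _ _ hY, ENNReal.toReal_ofReal (hw₀ _), hω]

variable [TopologicalSpace Ω] [BorelSpace Ω]

theorem Continuous.integrable_of_compactSpace [CompactSpace Ω] {E : Type*} [NormedAddCommGroup E]
    {g : Ω → E} (hg : Continuous g) (μ : Measure Ω) [IsFiniteMeasure μ] : Integrable g μ :=
  hg.integrable_of_hasCompactSupport (.of_compactSpace g)

theorem exists_isProbabilityMeasure_hasFullSupport [TopologicalSpace.SeparableSpace Ω]
    [Nonempty Ω] : ∃ ν : Measure Ω, IsProbabilityMeasure ν ∧ HasFullSupport ν := by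
  let p : unitInterval := ⟨1 / 2, by norm_num, by norm_num⟩
  have hp0 : p ≠ 0 := fun h => by simpa [p] using congrArg Subtype.val h
  have hp1 : p ≠ 1 := fun h => by simpa [p] using congrArg Subtype.val h
  let u := TopologicalSpace.denseSeq Ω
  have hu : Measurable u := measurable_from_nat
  refine ⟨(geometricMeasure p).map u, Measure.isProbabilityMeasure_map hu.aemeasurable,
    fun U hU hUne => ?_⟩
  obtain ⟨n, hn⟩ := (TopologicalSpace.denseRange_denseSeq Ω).exists_mem_open hU hUne
  rw [Measure.map_apply hu hU.measurableSet]
  calc 0 < geometricMeasure p {n} := ?_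
    _ ≤ _ := measure_mono (by simpa using hn)
  rw [geometricMeasure_singleton hp0]
  exact ENNReal.ofReal_pos.2 (geometricMeasure_pos hp0 hp1 n)

end Measures

section ConvexAnalysis

variable {E : Type*} [NormedAddCommGroup E] [NormedSpace ℝ E] [FiniteDimensional ℝ E]

theorem zero_mem_affineSpan_of_forall_dual {s : Set E} (hs : s.Nonempty)
    (hNA : ∀ φ : Module.Dual ℝ E, (∀ x ∈ s, 0 ≤ φ x) → ∀ x ∈ s, φ x = 0) :
    (0 : E) ∈ affineSpan ℝ s := by
  by_contra h
  obtain ⟨φ, u, hφ0, hφu⟩ := geometric_hahn_banach_point_closed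
    (affineSpan ℝ s).convex (affineSpan ℝ s).closed_of_finiteDimensional h
  obtain ⟨x, hx⟩ := hs
  have hpos : ∀ y ∈ s, 0 < φ y := fun y hy =>
    (map_zero φ ▸ hφ0).trans (hφu y (subset_affineSpan ℝ s hy))
  exact (hpos x hx).ne' (hNA φ.toLinearMap (fun y hy => (hpos y hy).le) x hx)

theorem zero_mem_interior_convexHull {s : Set E} (hs : s.Nonempty)
    (hspan : Submodule.span ℝ s = ⊤)
    (hNA : ∀ φ : Module.Dual ℝ E, (∀ x ∈ s, 0 ≤ φ x) → ∀ x ∈ s, φ x = 0) :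
    (0 : E) ∈ interior (convexHull ℝ s) := by
  have haff : affineSpan ℝ s = ⊤ := by
    rw [← affineSpan_insert_eq_affineSpan ℝ (zero_mem_affineSpan_of_forall_dual hs hNA)]
    exact SetLike.coe_injective (by rw [affineSpan_insert_zero, hspan, Submodule.top_coe,
      AffineSubspace.top_coe])
  have hint := interior_convexHull_nonempty_iff_affineSpan_eq_top.2 haff
  by_contra h
  obtain ⟨φ, hφ⟩ := geometric_hahn_banach_open_point (convex_convexHull ℝ s).interior
    isOpen_interior h
  have hle : ∀ x ∈ s, φ x ≤ 0 := by
    have : closure (interior (convexHull ℝ s)) ⊆ {y | φ y ≤ 0} :=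
      closure_minimal (fun y hy => by simpa using (hφ y hy).le)
        (isClosed_le φ.continuous continuous_const)
    rw [(convex_convexHull ℝ s).closure_interior_eq_closure_of_nonempty_interior hint] at this
    exact fun x hx => this (subset_closure (subset_convexHull ℝ s hx))
  have hφ_zero : φ.toLinearMap = 0 :=
    LinearMap.ext_on hspan fun x hx => by
      simpa using hNA (-φ.toLinearMap) (fun y hy => by simpa using hle y hy) x hx
  obtain ⟨y, hy⟩ := hint
  have hφy : φ y = 0 := LinearMap.congr_fun hφ_zero y
  simpa [hφy] using hφ y hy

end ConvexAnalysis

section VectorFTAP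

variable [TopologicalSpace Ω] [CompactSpace Ω] [TopologicalSpace.SeparableSpace Ω] [Nonempty Ω]
  [MeasurableSpace Ω] [BorelSpace Ω]
  {E : Type*} [NormedAddCommGroup E] [NormedSpace ℝ E] [FiniteDimensional ℝ E]

theorem exists_hasFullSupport_integral_eq_zero_of_span_eq_top {Y : Ω → E} (hY : Continuous Y)
    (hspan : Submodule.span ℝ (Set.range Y) = ⊤)
    (hNA : ∀ φ : Module.Dual ℝ E, (∀ ω, 0 ≤ φ (Y ω)) → ∀ ω, φ (Y ω) = 0) :
    ∃ P : Measure Ω, IsProbabilityMeasure P ∧ HasFullSupport P ∧ ∫ ω, Y ω ∂P = 0 := by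
  have := FiniteDimensional.complete ℝ E
  obtain ⟨ν, hν, hνfull⟩ := exists_isProbabilityMeasure_hasFullSupport (Ω := Ω)
  set b := ∫ ω, Y ω ∂ν
  have h0 : (0 : E) ∈ interior (convexHull ℝ (Set.range Y)) :=
    zero_mem_interior_convexHull (Set.range_nonempty Y) hspan
      (by simpa only [Set.forall_mem_range] using hNA)
  obtain ⟨t, ht, hbt⟩ : ∃ t : ℝ, 0 < t ∧ -t • b ∈ convexHull ℝ (Set.range Y) := by
    have hlim : Tendsto (fun t : ℝ => -t • b) (𝓝[>] 0) (𝓝 0) := by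
      have hc : Continuous fun t : ℝ => -t • b := continuous_id.neg.smul continuous_const
      simpa using (hc.tendsto 0).mono_left nhdsWithin_le_nhds
    exact ((hlim.eventually (mem_interior_iff_mem_nhds.1 h0)).and self_mem_nhdsWithin).exists.imp
      fun t h => ⟨h.2, h.1⟩
  obtain ⟨P', hP', hP'b⟩ :=
    exists_isProbabilityMeasure_integral_eq_of_mem_convexHull hY.stronglyMeasurable hbt
  -- mixing in the full-support `ν` with weight `t` cancels the barycentre `-t • b` of `P'`
  let μ := P' + t.toNNReal • ν
  have : NeZero μ := ⟨fun h => by simpa [μ] using congrArg (· Set.univ) h⟩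
  refine ⟨(μ Set.univ)⁻¹ • μ, inferInstance, fun U hU hUne => ?_, ?_⟩
  · have hμU : 0 < μ U :=
      calc (0 : ℝ≥0∞) < t.toNNReal • ν U := by simpa [ht] using hνfull U hU hUne
        _ ≤ μ U := le_add_self
    exact ENNReal.mul_pos (ENNReal.inv_ne_zero.2 (measure_ne_top μ _)) hμU.ne'
  · rw [integral_smul_measure, integral_add_measure (hY.integrable_of_compactSpace P')
      (hY.integrable_of_compactSpace _), integral_smul_nnreal_measure, hP'b, NNReal.smul_def,
      Real.coe_toNNReal _ ht.le, neg_smul, neg_add_cancel, smul_zero]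

theorem exists_hasFullSupport_integral_eq_zero {Y : Ω → E} (hY : Continuous Y)
    (hNA : ∀ φ : Module.Dual ℝ E, (∀ ω, 0 ≤ φ (Y ω)) → ∀ ω, φ (Y ω) = 0) :
    ∃ P : Measure Ω, IsProbabilityMeasure P ∧ HasFullSupport P ∧ ∫ ω, Y ω ∂P = 0 := by
  have := FiniteDimensional.complete ℝ E
  let V := Submodule.span ℝ (Set.range Y)
  let Y' : Ω → V := fun ω => ⟨Y ω, Submodule.subset_span ⟨ω, rfl⟩⟩
  have hY' : Continuous Y' := hY.subtype_mk _
  have hspan : Submodule.span ℝ (Set.range Y') = ⊤ := by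
    convert Submodule.span_span_coe_preimage (R := ℝ) (s := Set.range Y) using 2
    ext v
    simp [Y', Subtype.ext_iff]
  have hNA' : ∀ ψ : Module.Dual ℝ V, (∀ ω, 0 ≤ ψ (Y' ω)) → ∀ ω, ψ (Y' ω) = 0 := by
    intro ψ hψ
    obtain ⟨φ, hφ⟩ := LinearMap.exists_extend ψ
    have hφY : ∀ ω, φ (Y ω) = ψ (Y' ω) := fun ω => LinearMap.congr_fun hφ (Y' ω)
    simpa only [hφY] using hNA φ (by simpa only [hφY] using hψ)
  obtain ⟨P, hP, hfull, hP0⟩ :=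
    exists_hasFullSupport_integral_eq_zero_of_span_eq_top hY' hspan hNA'
  refine ⟨P, hP, hfull, ?_⟩
  simpa [hP0] using V.subtypeL.integral_comp_comm (hY'.integrable_of_compactSpace P)

end VectorFTAP

section Market

variable [TopologicalSpace Ω] {D : ℕ} {f : Fin (D + 1) → ℝ} {S : Fin (D + 1) → C(Ω, ℝ)}

def gains (f : Fin (D + 1) → ℝ) (S : Fin (D + 1) → C(Ω, ℝ)) (ω : Ω) : Fin (D + 1) → ℝ :=
  fun d => S d ω - f d

theorem continuous_gains : Continuous (gains f S) :=
  continuous_pi fun d => (S d).continuous.sub continuous_const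

theorem exists_replicating_portfolio (hS0 : ∀ ω, S 0 ω = 1) (hf0 : f 0 = 1)
    (ψ : Module.Dual ℝ (Fin (D + 1) → ℝ)) (c : ℝ) :
    ∃ π : Fin (D + 1) → ℝ, ∑ d, π d * f d = c ∧
      ∀ ω, ∑ d, π d * S d ω = c + ψ (gains f S ω) := by
  classical
  let w : Fin (D + 1) → ℝ := fun d => ψ (Pi.single d 1)
  have hψ : ∀ x, ψ x = ∑ d, w d * x d := fun x => by
    rw [LinearMap.pi_apply_eq_sum_univ]
    refine Finset.sum_congr rfl fun d _ => ?_
    rw [smul_eq_mul, mul_comm]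
    congr 2
    ext j
    simp [Pi.single_apply, eq_comm]
  refine ⟨fun d => w d + if d = 0 then c - ∑ e, w e * f e else 0, ?_, fun ω => ?_⟩
  · simp [add_mul, Finset.sum_add_distrib, hf0]
  · simp [add_mul, Finset.sum_add_distrib, hS0, hψ, gains, mul_sub]
    ring

theorem ArbitrageFree.dual_gains_eq_zero (hS0 : ∀ ω, S 0 ω = 1) (hf0 : f 0 = 1)
    (hNA : ArbitrageFree f S) (φ : Module.Dual ℝ (Fin (D + 1) → ℝ))
    (hφ : ∀ ω, 0 ≤ φ (gains f S ω)) (ω : Ω) : φ (gains f S ω) = 0 := by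
  by_contra hne
  obtain ⟨π, hcost, hpay⟩ := exists_replicating_portfolio hS0 hf0 φ 0
  refine hNA ⟨π, hcost.le, fun ω => ?_, ω, ?_⟩ <;> rw [hpay, zero_add]
  exacts [hφ ω, (hφ ω).lt_of_ne' hne]

variable [MeasurableSpace Ω]

theorem IsMartingaleMeasure.integral_payoff {P : Measure Ω} (hP : IsMartingaleMeasure f S P)
    (π : Fin (D + 1) → ℝ) : ∫ ω, ∑ d, π d * S d ω ∂P = ∑ d, π d * f d := by
  rw [integral_finsetSum _ fun d _ => ((hP.2 d).1.const_mul (π d))]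
  simp_rw [integral_const_mul, (hP.2 _).2]

theorem isMartingaleMeasure_snoc_iff {H : C(Ω, ℝ)} {c : ℝ} {P : Measure Ω} :
    IsMartingaleMeasure (Fin.snoc f c : Fin (D + 1 + 1) → ℝ) (Fin.snoc S H) P ↔
      IsMartingaleMeasure f S P ∧ Integrable H P ∧ ∫ ω, H ω ∂P = c := by
  simp only [IsMartingaleMeasure, Fin.forall_fin_succ', Fin.snoc_castSucc, Fin.snoc_last]
  tauto

variable [CompactSpace Ω] [BorelSpace Ω]

theorem isMartingaleMeasure_iff_integral_gains_eq_zero (P : Measure Ω) [IsProbabilityMeasure P] :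
    IsMartingaleMeasure f S P ↔ ∫ ω, gains f S ω ∂P = 0 := by
  have hint : ∀ d, Integrable (S d) P := fun d => (S d).continuous.integrable_of_compactSpace P
  have hcoord : ∀ d, (∫ ω, gains f S ω ∂P) d = ∫ ω, S d ω ∂P - f d := fun d => by
    rw [eval_integral (f := gains f S) fun d => (hint d).sub (integrable_const (f d))]
    simp only [gains]
    rw [integral_sub (hint d) (integrable_const _), integral_const, probReal_univ, one_smul]
  simp [IsMartingaleMeasure, funext_iff, hcoord, sub_eq_zero, hint, ‹IsProbabilityMeasure P›]

theorem IsMartingaleMeasure.integral_le_cost {P : Measure Ω} (hP : IsMartingaleMeasure f S P)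
    {H : C(Ω, ℝ)} {π : Fin (D + 1) → ℝ} (hπ : IsSuperhedge S H π) :
    ∫ ω, H ω ∂P ≤ ∑ d, π d * f d := by
  have := hP.1
  rw [← hP.integral_payoff π]
  exact integral_mono (H.continuous.integrable_of_compactSpace P)
    (integrable_finsetSum _ fun d _ => (hP.2 d).1.const_mul (π d)) hπ

theorem HasFullSupport.integral_pos {P : Measure Ω} [IsFiniteMeasure P] (hP : HasFullSupport P)
    {g : Ω → ℝ} (hg : Continuous g) (hg0 : ∀ ω, 0 ≤ g ω) {ω₀ : Ω} (hω₀ : 0 < g ω₀) :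
    0 < ∫ ω, g ω ∂P :=
  (integral_pos_iff_support_of_nonneg hg0 (hg.integrable_of_compactSpace P)).2
    (hP _ hg.isOpen_support ⟨ω₀, hω₀.ne'⟩)

variable [TopologicalSpace.SeparableSpace Ω] [Nonempty Ω]

theorem ArbitrageFree.exists_isMartingaleMeasure_hasFullSupport (hS0 : ∀ ω, S 0 ω = 1)
    (hf0 : f 0 = 1) (hNA : ArbitrageFree f S) :
    ∃ P : Measure Ω, IsMartingaleMeasure f S P ∧ HasFullSupport P := by
  obtain ⟨P, hP, hfull, h0⟩ :=
    exists_hasFullSupport_integral_eq_zero continuous_gains (hNA.dual_gains_eq_zero hS0 hf0)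
  exact ⟨P, (isMartingaleMeasure_iff_integral_gains_eq_zero P).2 h0, hfull⟩

theorem exists_isSuperhedge_cost_le (hS0 : ∀ ω, S 0 ω = 1) (hf0 : f 0 = 1) {P₀ : Measure Ω}
    (hP₀ : IsMartingaleMeasure f S P₀) (hP₀full : HasFullSupport P₀) (H : C(Ω, ℝ)) {c : ℝ}
    (hc : ∫ ω, H ω ∂P₀ < c)
    (hcB : ∀ P, IsMartingaleMeasure f S P → HasFullSupport P → ∫ ω, H ω ∂P ≠ c) :
    ∃ π, IsSuperhedge S H π ∧ ∑ d, π d * f d ≤ c := by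
  have hArb : ¬ ArbitrageFree (Fin.snoc f c : Fin (D + 1 + 1) → ℝ) (Fin.snoc S H) := by
    intro hNA
    obtain ⟨P, hP, hfull⟩ := hNA.exists_isMartingaleMeasure_hasFullSupport
      (by simpa [Fin.snoc] using hS0) (by simpa [Fin.snoc] using hf0)
    obtain ⟨hPm, -, hPH⟩ := isMartingaleMeasure_snoc_iff.1 hP
    exact hcB P hPm hfull hPH
  obtain ⟨π', hcost, hpay, ω₀, hω₀⟩ := not_not.1 hArb
  simp only [Fin.sum_univ_castSucc (n := D + 1), Fin.snoc_castSucc, Fin.snoc_last]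
    at hcost hpay hω₀
  set π := fun d => π' (Fin.castSucc d)
  set lam := π' (Fin.last (D + 1))
  have := hP₀.1
  have hpos : 0 < ∑ d, π d * f d + lam * ∫ ω, H ω ∂P₀ := by
    have h := hP₀full.integral_pos (by fun_prop) hpay hω₀
    rwa [integral_add (integrable_finsetSum _ fun d _ => (hP₀.2 d).1.const_mul (π d))
      ((H.continuous.integrable_of_compactSpace P₀).const_mul lam), hP₀.integral_payoff,
      integral_const_mul] at h
  have hlam : 0 < -lam := by nlinarith
  refine ⟨fun d => π d / -lam, fun ω => ?_, ?_⟩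
  · show H ω ≤ ∑ d, π d / -lam * S d ω
    simp_rw [div_mul_eq_mul_div, ← Finset.sum_div, le_div_iff₀ hlam]
    linarith [hpay ω]
  · simp_rw [div_mul_eq_mul_div, ← Finset.sum_div, div_le_iff₀ hlam]
    linarith

end Market

theorem superhedge_eq_sup_noArbitragePrices_general
    [MetricSpace Ω] [Nonempty Ω] [CompactSpace Ω] [TopologicalSpace.SeparableSpace Ω]
    [MeasurableSpace Ω] [BorelSpace Ω] {D : ℕ} (f : Fin (D + 1) → ℝ) (S : Fin (D + 1) → C(Ω, ℝ))
    (hS0 : ∀ ω, S 0 ω = 1) (hf0 : f 0 = 1)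
    (hNA : ArbitrageFree f S) (H : C(Ω, ℝ)) :
    sInf {x : ℝ | ∃ π : Fin (D + 1) → ℝ, IsSuperhedge S H π ∧ x = ∑ d, π d * f d} =
    sSup {x : ℝ | ∃ P : Measure Ω, IsMartingaleMeasure f S P ∧ HasFullSupport P ∧
      x = ∫ ω, H ω ∂P} := by
  set A := {x : ℝ | ∃ π : Fin (D + 1) → ℝ, IsSuperhedge S H π ∧ x = ∑ d, π d * f d}
  set B := {x : ℝ | ∃ P : Measure Ω, IsMartingaleMeasure f S P ∧ HasFullSupport P ∧
      x = ∫ ω, H ω ∂P}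
  have hBA : ∀ b ∈ B, ∀ a ∈ A, b ≤ a := by
    rintro _ ⟨P, hP, -, rfl⟩ _ ⟨π, hπ, rfl⟩
    exact hP.integral_le_cost hπ
  obtain ⟨P₀, hP₀, hP₀full⟩ := hNA.exists_isMartingaleMeasure_hasFullSupport hS0 hf0
  have hB : (∫ ω, H ω ∂P₀) ∈ B := ⟨P₀, hP₀, hP₀full, rfl⟩
  have hA : ‖H‖ ∈ A := by
    obtain ⟨π, hcost, hpay⟩ := exists_replicating_portfolio hS0 hf0 0 ‖H‖
    exact ⟨π, fun ω => by simpa [hpay] using (le_abs_self _).trans (H.norm_coe_le_norm ω),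
      hcost.symm⟩
  have hBbdd : BddAbove B := ⟨‖H‖, fun b hb => hBA b hb _ hA⟩
  refine le_antisymm (le_of_forall_pos_le_add fun ε hε => ?_)
    (csSup_le ⟨_, hB⟩ fun b hb => le_csInf ⟨_, hA⟩ (hBA b hb))
  obtain ⟨π, hπ, hcost⟩ := exists_isSuperhedge_cost_le hS0 hf0 hP₀ hP₀full H
    (c := sSup B + ε) (by linarith [le_csSup hBbdd hB])
    (fun P hP hfull hPH => by linarith [le_csSup hBbdd ⟨P, hP, hfull, hPH.symm⟩])
  exact (csInf_le ⟨_, hBA _ hB⟩ ⟨π, hπ, rfl⟩).trans hcost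

/-- the cheapest superhedging cost equals the least upper bound of the
no-arbitrage prices (expectations under full support martingale measures). -/
theorem superhedge_eq_sup_noArbitragePrices
    [MetricSpace Ω] [Nonempty Ω] [CompactSpace Ω] [TopologicalSpace.SeparableSpace Ω]
    [CompleteSpace Ω] [MeasurableSpace Ω] [BorelSpace Ω] {D : ℕ} (f : Fin (D + 1) → ℝ) (S : Fin (D + 1) → C(Ω, ℝ))
    (hf : ∀ d, 0 ≤ f d) (hS : ∀ d ω, 0 ≤ S d ω)
    (hS0 : ∀ ω, S 0 ω = 1) (hf0 : f 0 = 1)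
    (hNA : ArbitrageFree f S) (H : C(Ω, ℝ)) (hH : ∀ ω, 0 ≤ H ω) :
    sInf {x : ℝ | ∃ π : Fin (D + 1) → ℝ, IsSuperhedge S H π ∧ x = ∑ d, π d * f d} =
    sSup {x : ℝ | ∃ P : Measure Ω, IsMartingaleMeasure f S P ∧ HasFullSupport P ∧
      x = ∫ ω, H ω ∂P} :=
  superhedge_eq_sup_noArbitragePrices_general f S hS0 hf0 hNA H
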